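/- Let F be a field and n ≥ 2. Let τ = (1,0,…,0)ᵀ ∈ F^{n-1} and let γ_τ ∈ GL(n+1,F) be the matrix with blocks: I_{n-1} upper-left, column τ in the top-right (n-1)×1 block, lower-right 2×2 block [[1,0],[1,1]], and zeros elsewhere. For x ∈ GL(n,F) write ι(x) = diag(x,1). Then ι(x)·γ_τ = γ_τ·ι(x) if and only if x has the block form [[1, b, c₁],[0, A, c'],[0,0,1]] with A ∈ GL(n-2,F), b a row vector, c₁ a scalar, c' a column vector (for n = 2, this means x = [[1, c₁],[0,1]]). -/

import Mathlib

/-- The embedding `x ↦ diag(x, 1)` of `GL(n)` into `GL(n+1)`. -/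
def iota {R : Type*} [CommRing R] {n : ℕ} (x : Matrix (Fin n) (Fin n) R) :
    Matrix (Fin (n + 1)) (Fin (n + 1)) R :=
  Matrix.reindex finSumFinEquiv finSumFinEquiv
    (Matrix.fromBlocks x 0 0 (1 : Matrix (Fin 1) (Fin 1) R))

/-- Identification of `Fin 1 ⊕ (Fin (n-2) ⊕ Fin 1)` with `Fin n`. -/
def blockIndexEquiv (n : ℕ) (hn : 2 ≤ n) : (Fin 1 ⊕ (Fin (n - 2) ⊕ Fin 1)) ≃ Fin n :=
  (Equiv.sumCongr (Equiv.refl (Fin 1)) finSumFinEquiv).trans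
    (finSumFinEquiv.trans (finCongr (by omega)))

section Aux

variable {R : Type*} [CommRing R] {n : ℕ} (x : Matrix (Fin n) (Fin n) R)

lemma iota_cc (i j : Fin n) : iota x i.castSucc j.castSucc = x i j := by
  have hi : i.castSucc = Fin.castAdd 1 i := rfl
  have hj : j.castSucc = Fin.castAdd 1 j := rfl
  simp [iota, hi, hj]

lemma iota_cl (i : Fin n) : iota x i.castSucc (Fin.last n) = 0 := by
  have hi : i.castSucc = Fin.castAdd 1 i := rfl
  simp [iota, hi, finSumFinEquiv_symm_last]

lemma iota_lc (j : Fin n) : iota x (Fin.last n) j.castSucc = 0 := by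
  have hj : j.castSucc = Fin.castAdd 1 j := rfl
  simp [iota, hj, finSumFinEquiv_symm_last]

lemma iota_ll : iota x (Fin.last n) (Fin.last n) = 1 := by
  simp [iota, finSumFinEquiv_symm_last, Matrix.one_apply]

lemma stdmul_left {α : Type*} {m : Type*} [Fintype m] [DecidableEq m]
    [NonAssocSemiring α] (i j a b : m) (c : α) (M : Matrix m m α) :
    (Matrix.single i j c * M) a b = if a = i then c * M j b else 0 := by
  rcases eq_or_ne a i with rfl | h
  · simp
  · simp [h]

lemma stdmul_right {α : Type*} {m : Type*} [Fintype m] [DecidableEq m]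
    [NonAssocSemiring α] (i j a b : m) (c : α) (M : Matrix m m α) :
    (M * Matrix.single i j c) a b = if b = j then M a i * c else 0 := by
  rcases eq_or_ne b j with rfl | h
  · simp
  · simp [h]

lemma bie_val {n : ℕ} (hn : 2 ≤ n) (s : Fin 1 ⊕ (Fin (n-2) ⊕ Fin 1)) :
    ((blockIndexEquiv n hn s) : ℕ) =
      Sum.elim (fun (_ : Fin 1) => 0)
        (Sum.elim (fun k : Fin (n-2) => (k:ℕ)+1) (fun (_ : Fin 1) => n-1)) s := by
  rcases s with i | k | i <;>
    simp [blockIndexEquiv, finSumFinEquiv_apply_left, finSumFinEquiv_apply_right] <;> omega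

set_option maxHeartbeats 1600000 in
lemma key_iff (F : Type*) [Field F] (n : ℕ) (hn : 2 ≤ n) (x : Matrix (Fin n) (Fin n) F) :
    iota x * (1 + Matrix.single (⟨n, Nat.lt_succ_self n⟩ : Fin (n + 1)) ⟨n - 1, Nat.lt_of_le_of_lt (Nat.sub_le n 1) (Nat.lt_succ_self n)⟩ (1 : F)
        + Matrix.single (⟨0, Nat.succ_pos n⟩ : Fin (n + 1)) ⟨n, Nat.lt_succ_self n⟩ 1) =
      (1 + Matrix.single (⟨n, Nat.lt_succ_self n⟩ : Fin (n + 1)) ⟨n - 1, Nat.lt_of_le_of_lt (Nat.sub_le n 1) (Nat.lt_succ_self n)⟩ (1 : F)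
        + Matrix.single (⟨0, Nat.succ_pos n⟩ : Fin (n + 1)) ⟨n, Nat.lt_succ_self n⟩ 1) * iota x ↔
    (∀ i : Fin n, x i ⟨0, by omega⟩ = if i = ⟨0, by omega⟩ then 1 else 0) ∧
    (∀ j : Fin n, x ⟨n - 1, by omega⟩ j = if j = ⟨n - 1, by omega⟩ then 1 else 0) := by
  have el : (⟨n, Nat.lt_succ_self n⟩ : Fin (n + 1)) = Fin.last n := rfl
  have eq1 : (⟨n - 1, Nat.lt_of_le_of_lt (Nat.sub_le n 1) (Nat.lt_succ_self n)⟩ : Fin (n + 1)) = Fin.castSucc (⟨n - 1, by omega⟩ : Fin n) := rfl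
  have e0 : (⟨0, Nat.succ_pos n⟩ : Fin (n + 1)) = Fin.castSucc (⟨0, by omega⟩ : Fin n) := rfl
  rw [el, eq1, e0]
  have hq : Fin.last n ≠ Fin.castSucc (⟨n - 1, by omega⟩ : Fin n) :=
    ((Fin.castSucc_lt_last _).ne).symm
  have hcl : ∀ i : Fin n, i.castSucc ≠ Fin.last n := fun i => (Fin.castSucc_lt_last i).ne
  rw [mul_add, mul_add, add_mul, add_mul, mul_one, one_mul]
  constructor
  · intro h
    constructor
    · intro i
      have h1 := Matrix.ext_iff.2 h i.castSucc (Fin.last n)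
      simp only [Matrix.add_apply, stdmul_left, stdmul_right, iota_cc, iota_cl, iota_lc,
        iota_ll, hq, hcl, if_false, if_true, if_pos rfl, ite_false, one_mul, mul_one,
        zero_add, add_zero, Fin.castSucc_inj] at h1
      simpa using h1
    · intro j
      have h2 := Matrix.ext_iff.2 h (Fin.last n) j.castSucc
      simp only [Matrix.add_apply, stdmul_left, stdmul_right, iota_cc, iota_cl, iota_lc,
        iota_ll, hq, hcl, if_false, if_true, if_pos rfl, ite_false, one_mul, mul_one,
        zero_add, add_zero, Fin.castSucc_inj] at h2
      simpa using h2.symm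
  · rintro ⟨h1, h2⟩
    have hlc : ∀ i : Fin n, Fin.last n ≠ i.castSucc := fun i => (hcl i).symm
    ext a b
    induction a using Fin.lastCases with
    | last =>
      induction b using Fin.lastCases with
      | last => simp only [Matrix.add_apply, stdmul_left, stdmul_right, iota_ll, iota_lc,
          iota_cl, hq, hcl, hlc, eq_self_iff_true, if_true, if_false, ite_self, ite_false,
          ite_true, one_mul, mul_one, add_zero, zero_add]
      | cast j => simp only [Matrix.add_apply, stdmul_left, stdmul_right, iota_ll, iota_lc,
          iota_cc, hq, hcl, hlc, Fin.castSucc_inj, eq_self_iff_true, if_true, if_false,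
          ite_self, ite_false, ite_true, one_mul, mul_one, add_zero, zero_add, h2 j]
    | cast i =>
      induction b using Fin.lastCases with
      | last => simp only [Matrix.add_apply, stdmul_left, stdmul_right, iota_ll, iota_cl,
          iota_cc, hq, hcl, hlc, Fin.castSucc_inj, eq_self_iff_true, if_true, if_false,
          ite_self, ite_false, ite_true, one_mul, mul_one, add_zero, zero_add, h1 i]
      | cast j => simp only [Matrix.add_apply, stdmul_left, stdmul_right, iota_cc, iota_cl,
          iota_lc, hq, hcl, hlc, Fin.castSucc_inj, eq_self_iff_true, if_true, if_false,
          ite_self, ite_false, ite_true, one_mul, mul_one, add_zero, zero_add]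

set_option maxHeartbeats 1600000 in
lemma part2 (F : Type*) [Field F] (n : ℕ) (hn : 2 ≤ n)
    (x : Matrix (Fin n) (Fin n) F) (hx : IsUnit x.det)
    (h1 : ∀ i : Fin n, x i ⟨0, by omega⟩ = if i = ⟨0, by omega⟩ then 1 else 0)
    (h2 : ∀ j : Fin n, x ⟨n - 1, by omega⟩ j = if j = ⟨n - 1, by omega⟩ then 1 else 0) :
    ∃ (A : Matrix (Fin (n - 2)) (Fin (n - 2)) F) (b : Fin (n - 2) → F) (c₁ : F)
        (c' : Fin (n - 2) → F), IsUnit A.det ∧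
      x = Matrix.reindex (blockIndexEquiv n hn) (blockIndexEquiv n hn)
            (Matrix.fromBlocks (1 : Matrix (Fin 1) (Fin 1) F)
              (Matrix.of fun _ j => Sum.elim b (fun _ => c₁) j) 0
              (Matrix.fromBlocks A (Matrix.of fun i (_ : Fin 1) => c' i) 0 1)) := by
  set e := blockIndexEquiv n hn with he
  set A : Matrix (Fin (n-2)) (Fin (n-2)) F :=
    fun i j => x (e (.inr (.inl i))) (e (.inr (.inl j))) with hA
  set b : Fin (n-2) → F := fun j => x (e (.inl 0)) (e (.inr (.inl j))) with hb
  set c₁ : F := x (e (.inl 0)) (e (.inr (.inr 0))) with hc1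
  set c' : Fin (n-2) → F := fun i => x (e (.inr (.inl i))) (e (.inr (.inr 0))) with hc'
  have h0 : e (.inl 0) = (⟨0, by omega⟩ : Fin n) := Fin.ext (bie_val hn _)
  have hN : e (.inr (.inr 0)) = (⟨n - 1, by omega⟩ : Fin n) := Fin.ext (bie_val hn _)
  have hxeq : x = Matrix.reindex e e
      (Matrix.fromBlocks (1 : Matrix (Fin 1) (Fin 1) F)
        (Matrix.of fun _ j => Sum.elim b (fun _ => c₁) j) 0
        (Matrix.fromBlocks A (Matrix.of fun i (_ : Fin 1) => c' i) 0 1)) := by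
    ext i j
    obtain ⟨s, rfl⟩ : ∃ s, e s = i := ⟨e.symm i, e.apply_symm_apply i⟩
    obtain ⟨t, rfl⟩ : ∃ t, e t = j := ⟨e.symm j, e.apply_symm_apply j⟩
    rw [Matrix.reindex_apply, Matrix.submatrix_apply, e.symm_apply_apply, e.symm_apply_apply]
    rcases s with si | sk | si <;> rcases t with ti | tk | ti <;>
      first
      | rfl
      | (rw [Fin.fin_one_eq_zero si, Fin.fin_one_eq_zero ti]; rfl)
      | (rw [Fin.fin_one_eq_zero si]; rfl)
      | (rw [Fin.fin_one_eq_zero ti]; rfl)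
      | skip
    · -- inl inl
      rw [Fin.fin_one_eq_zero si, Fin.fin_one_eq_zero ti, h0]
      simp [h1, Matrix.one_apply]
    · -- inr inl, inl : zero
      rw [Fin.fin_one_eq_zero ti, h0]
      rw [h1]
      have : e (.inr (.inl sk)) ≠ (⟨0, by omega⟩ : Fin n) := by
        intro hcon
        have := congrArg Fin.val hcon
        rw [bie_val hn] at this; simp at this
      simp [this, Matrix.fromBlocks]
    · -- inr inr, inl : zero
      rw [Fin.fin_one_eq_zero si, Fin.fin_one_eq_zero ti, h0, hN]
      rw [h1]
      have : (⟨n - 1, by omega⟩ : Fin n) ≠ (⟨0, by omega⟩ : Fin n) := by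
        simp [Fin.ext_iff]; omega
      simp [this, Matrix.fromBlocks]
    · -- inr inr, inr inl : zero
      rw [Fin.fin_one_eq_zero si, hN, h2]
      have : e (.inr (.inl tk)) ≠ (⟨n - 1, by omega⟩ : Fin n) := by
        intro hcon
        have := congrArg Fin.val hcon
        rw [bie_val hn] at this; simp at this; omega
      simp [this, Matrix.fromBlocks]
    · -- inr inr, inr inr : one
      rw [Fin.fin_one_eq_zero si, Fin.fin_one_eq_zero ti, hN, h2]
      simp [Matrix.fromBlocks, Matrix.one_apply]
  refine ⟨A, b, c₁, c', ?_, hxeq⟩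
  rw [hxeq] at hx
  simpa [Matrix.det_fromBlocks_zero₂₁] using hx

set_option maxHeartbeats 1600000 in
lemma part3 (F : Type*) [Field F] (n : ℕ) (hn : 2 ≤ n)
    (A : Matrix (Fin (n - 2)) (Fin (n - 2)) F) (b : Fin (n - 2) → F) (c₁ : F)
    (c' : Fin (n - 2) → F)
    (x : Matrix (Fin n) (Fin n) F)
    (hxeq : x = Matrix.reindex (blockIndexEquiv n hn) (blockIndexEquiv n hn)
            (Matrix.fromBlocks (1 : Matrix (Fin 1) (Fin 1) F)
              (Matrix.of fun _ j => Sum.elim b (fun _ => c₁) j) 0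
              (Matrix.fromBlocks A (Matrix.of fun i (_ : Fin 1) => c' i) 0 1))) :
    (∀ i : Fin n, x i ⟨0, by omega⟩ = if i = ⟨0, by omega⟩ then 1 else 0) ∧
    (∀ j : Fin n, x ⟨n - 1, by omega⟩ j = if j = ⟨n - 1, by omega⟩ then 1 else 0) := by
  subst hxeq
  set e := blockIndexEquiv n hn with he
  have h0 : e (.inl 0) = (⟨0, by omega⟩ : Fin n) := Fin.ext (bie_val hn _)
  have hN : e (.inr (.inr 0)) = (⟨n - 1, by omega⟩ : Fin n) := Fin.ext (bie_val hn _)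
  have h0s : e.symm (⟨0, by omega⟩ : Fin n) = .inl 0 := by
    rw [Equiv.symm_apply_eq, h0]
  have hNs : e.symm (⟨n - 1, by omega⟩ : Fin n) = .inr (.inr 0) := by
    rw [Equiv.symm_apply_eq, hN]
  constructor
  · intro i
    obtain ⟨s, rfl⟩ : ∃ s, e s = i := ⟨e.symm i, e.apply_symm_apply i⟩
    rw [Matrix.reindex_apply, Matrix.submatrix_apply, h0s, e.symm_apply_apply]
    rcases s with u | u | u
    · rw [Fin.fin_one_eq_zero u, h0]
      simp [Matrix.one_apply]
    · have : e (.inr (.inl u)) ≠ (⟨0, by omega⟩ : Fin n) := by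
        intro hcon
        have := congrArg Fin.val hcon
        rw [bie_val hn] at this; simp at this
      simp [this, Matrix.fromBlocks]
    · have : e (.inr (.inr u)) ≠ (⟨0, by omega⟩ : Fin n) := by
        intro hcon
        have := congrArg Fin.val hcon
        rw [bie_val hn] at this; simp at this; omega
      simp [this, Matrix.fromBlocks]
  · intro j
    obtain ⟨t, rfl⟩ : ∃ t, e t = j := ⟨e.symm j, e.apply_symm_apply j⟩
    rw [Matrix.reindex_apply, Matrix.submatrix_apply, hNs, e.symm_apply_apply]
    rcases t with u | u | u
    · have : e (.inl u) ≠ (⟨n - 1, by omega⟩ : Fin n) := by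
        intro hcon
        have := congrArg Fin.val hcon
        rw [bie_val hn] at this; simp at this; omega
      simp [this, Matrix.fromBlocks]
    · have : e (.inr (.inl u)) ≠ (⟨n - 1, by omega⟩ : Fin n) := by
        intro hcon
        have := congrArg Fin.val hcon
        rw [bie_val hn] at this; simp at this; omega
      simp [this, Matrix.fromBlocks]
    · rw [Fin.fin_one_eq_zero u, hN]
      simp [Matrix.fromBlocks, Matrix.one_apply]

end Aux

/-- The stabilizer of `γ_τ` is the group `S₀` of Section 5.2.2. -/
theorem stmt_6 (F : Type*) [Field F] (n : ℕ) (hn : 2 ≤ n)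
    (x : Matrix (Fin n) (Fin n) F) (hx : IsUnit x.det) :
    iota x * (1 + Matrix.single (⟨n, by omega⟩ : Fin (n + 1)) ⟨n - 1, by omega⟩ (1 : F)
        + Matrix.single (⟨0, by omega⟩ : Fin (n + 1)) ⟨n, by omega⟩ 1) =
      (1 + Matrix.single (⟨n, by omega⟩ : Fin (n + 1)) ⟨n - 1, by omega⟩ (1 : F)
        + Matrix.single (⟨0, by omega⟩ : Fin (n + 1)) ⟨n, by omega⟩ 1) * iota x ↔
    ∃ (A : Matrix (Fin (n - 2)) (Fin (n - 2)) F) (b : Fin (n - 2) → F) (c₁ : F)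
        (c' : Fin (n - 2) → F), IsUnit A.det ∧
      x = Matrix.reindex (blockIndexEquiv n hn) (blockIndexEquiv n hn)
            (Matrix.fromBlocks (1 : Matrix (Fin 1) (Fin 1) F)
              (Matrix.of fun _ j => Sum.elim b (fun _ => c₁) j) 0
              (Matrix.fromBlocks A (Matrix.of fun i (_ : Fin 1) => c' i) 0 1)) := by
  rw [key_iff F n hn x]
  constructor
  · rintro ⟨h1, h2⟩
    exact part2 F n hn x hx h1 h2
  · rintro ⟨A, b, c₁, c', hA, hxeq⟩
    exact part3 F n hn A b c₁ c' x hxeq
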